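/- Let s > 1 be a real number and let ψ_s(x) = (x + i)^{−(s+1)}. Then ∫_0^∞ |ψ̂_s(ξ)|² dξ/ξ = |2π e^{iπ(s+1)/2}/Γ(s+1)|² · 2^{−2s} · Γ(2s), and in particular this integral is finite. -/

import Mathlib

open scoped Real MatrixGroups
open Filter MeasureTheory UpperHalfPlane

noncomputable section

/-- Iterates of the Gauss map: `cfX x n` is the `n`-th complete quotient of `x`. -/
def cfX (x : ℝ) : ℕ → ℝ
  | 0 => x
  | n+1 => 1 / (cfX x n - ⌊cfX x n⌋)

/-- The partial quotients `a_n` of the continued fraction expansion of `x`. -/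
def cfa (x : ℝ) (n : ℕ) : ℤ := ⌊cfX x n⌋

/-- Numerators `p_n` of the continued fraction convergents of `x`. -/
def cfp (x : ℝ) : ℕ → ℤ
  | 0 => cfa x 0
  | 1 => cfa x 1 * cfa x 0 + 1
  | n+2 => cfa x (n+2) * cfp x (n+1) + cfp x n

/-- Denominators `q_n` of the continued fraction convergents of `x`. -/
def cfq (x : ℝ) : ℕ → ℤ
  | 0 => 1
  | 1 => cfa x 1
  | n+2 => cfa x (n+2) * cfq x (n+1) + cfq x n

/-- `κ_n`, defined by `|x - p_n/q_n| = q_n ^ (-κ_n)`. -/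
def kappa (x : ℝ) (n : ℕ) : ℝ :=
  -Real.log |x - (cfp x n : ℝ) / (cfq x n : ℝ)| / Real.log (cfq x n)

/-- `μ(x) = limsup κ_n`, as an extended real number. -/
def mu (x : ℝ) : EReal := Filter.limsup (fun n => ((kappa x n : ℝ) : EReal)) Filter.atTop

/-- `ν(x) = liminf κ_n`, as an extended real number. -/
def nu (x : ℝ) : EReal := Filter.liminf (fun n => ((kappa x n : ℝ) : EReal)) Filter.atTop

/-- The real inverse of an extended real number, with the convention `1/∞ = 0`. -/
def invE (m : EReal) : ℝ := if m = ⊤ then 0 else 1 / m.toReal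

/-- `f ∈ C^α(x₀)`: there are a polynomial `P` of degree at most `⌊α⌋` and a constant `C > 0`
with `|f x - P (x - x₀)| ≤ C * |x - x₀| ^ α` near `x₀`. -/
def HolderAt (f : ℝ → ℝ) (α : ℝ) (x₀ : ℝ) : Prop :=
  ∃ (P : Polynomial ℝ) (C : ℝ), 0 < C ∧ (P.natDegree : ℤ) ≤ ⌊α⌋ ∧
    ∀ᶠ x in nhds x₀, |f x - P.eval (x - x₀)| ≤ C * |x - x₀| ^ α

/-- The Hölder regularity exponent of `f` at `x₀`. -/
def holderExponent (f : ℝ → ℝ) (x₀ : ℝ) : ℝ :=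
  sSup {β : ℝ | 0 < β ∧ HolderAt f β x₀}

/-- The series `M_{k,s}(x) = Σ_{n≥1} (r_n / n^s) sin(2πnx)`. -/
def Mks (r : ℕ → ℝ) (s : ℝ) (x : ℝ) : ℝ :=
  ∑' n : ℕ, r (n+1) / ((n+1 : ℝ)) ^ s * Real.sin (2 * π * (n+1) * x)

/-- The point `b + i a` of the upper half-plane (for `a > 0`). -/
def mkH (b a : ℝ) (ha : 0 < a) : ℍ := ⟨⟨b, a⟩, ha⟩

/-- The wavelet `ψ_s(t) = (t + i)^{-(s+1)}` (principal branch). -/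
def psiW (s : ℝ) (t : ℝ) : ℂ := ((t : ℂ) + Complex.I) ^ (-(s+1) : ℂ)

/-- The wavelet transform `C(a,b)(f) = a⁻¹ ∫ f(t) conj(ψ_s((t-b)/a)) dt`. -/
def waveletT (s : ℝ) (f : ℝ → ℝ) (a b : ℝ) : ℂ :=
  (1/a : ℂ) * ∫ t : ℝ, (f t : ℂ) * (starRingEnd ℂ) (psiW s ((t - b)/a))

/-- The Fourier transform `ĝ(ξ) = ∫ g(x) e^{-ixξ} dx`. -/
def fourierT (g : ℝ → ℂ) (ξ : ℝ) : ℂ := ∫ x : ℝ, g x * Complex.exp (-(Complex.I * x * ξ))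

/-- The sum-of-divisors function `σ₁`. -/
def sigma1 (n : ℕ) : ℕ := ∑ d ∈ n.divisors, d

/-- The constant `Ĉ = (2π)^s ⬝ π e^{iπs/2} / Γ(s+1)`. -/
def Chat (s : ℝ) : ℂ :=
  (((2*π : ℝ) ^ s : ℝ) : ℂ) * ((π : ℂ) * Complex.exp ((π : ℂ) * Complex.I * s / 2) /
    Complex.Gamma ((s : ℂ) + 1))

/-- The series `E_{2,s}(x) = Σ_{n≥1} (σ₁(n)/n^s) sin(2πnx)`. -/
def E2s (s : ℝ) (x : ℝ) : ℝ :=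
  ∑' n : ℕ, (sigma1 (n+1) : ℝ) / ((n+1 : ℝ)) ^ s * Real.sin (2 * π * (n+1) * x)

/-!
For `Re z > 0`, `∫₀^∞ tˢ e^{-zt} dt = Γ(s+1) z^{-(s+1)}`, by analytic continuation from real `z`.
Since `2πy + i = i (1 - 2πiy)`, with `z = 1 - 2πiy` this exhibits `y ↦ ψ_s(2πy)` as
`i^{-(s+1)} / Γ(s+1)` times the inverse Fourier transform of `g(t) = 𝟙_{t>0} tˢ e^{-t}`.
Fourier inversion then gives `ψ̂_s(ξ) = 2π i^{-(s+1)} ξˢ e^{-ξ} / Γ(s+1)` for `ξ > 0`, and the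
admissibility integral becomes the Gamma integral `∫₀^∞ ξ^{2s-1} e^{-2ξ} dξ = 2^{-2s} Γ(2s)`.
-/

open Complex Set
open scoped FourierTransform Topology

theorem mul_cpow_of_arg_add_mem_Ioc {x y : ℂ} (hx : x ≠ 0) (hy : y ≠ 0)
    (h : x.arg + y.arg ∈ Ioc (-π) π) (c : ℂ) : (x * y) ^ c = x ^ c * y ^ c := by
  rw [cpow_def_of_ne_zero (mul_ne_zero hx hy), cpow_def_of_ne_zero hx, cpow_def_of_ne_zero hy,
    log_mul hx hy h, add_mul, exp_add]

theorem integrableOn_rpow_mul_exp_neg_mul_Ioi {a r : ℝ} (ha : -1 < a) (hr : 0 < r) :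
    IntegrableOn (fun t : ℝ => t ^ a * Real.exp (-(r * t))) (Ioi 0) := by
  simpa only [Real.rpow_one, neg_mul] using integrableOn_rpow_mul_exp_neg_mul_rpow ha one_pos hr

theorem norm_ofReal_cpow_mul_exp_neg_mul {t : ℝ} (ht : 0 < t) (a z : ℂ) :
    ‖(t : ℂ) ^ a * cexp (-(z * t))‖ = t ^ a.re * Real.exp (-(z.re * t)) := by
  rw [norm_mul, norm_cpow_eq_rpow_re_of_pos ht, norm_exp, neg_re, re_mul_ofReal]

theorem continuousOn_ofReal_cpow_mul_exp_neg_mul (a z : ℂ) :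
    ContinuousOn (fun t : ℝ => (t : ℂ) ^ a * cexp (-(z * t))) (Ioi 0) := fun t ht =>
  ((continuousAt_ofReal_cpow_const t a (Or.inr (ne_of_gt ht))).mul
    (by fun_prop : Continuous fun t : ℝ => cexp (-(z * t))).continuousAt).continuousWithinAt

theorem integrableOn_cpow_mul_exp_neg_mul_Ioi {a z : ℂ} (ha : 0 < a.re) (hz : 0 < z.re) :
    IntegrableOn (fun t : ℝ => (t : ℂ) ^ (a - 1) * cexp (-(z * t))) (Ioi 0) := by
  refine Integrable.mono' (integrableOn_rpow_mul_exp_neg_mul_Ioi (a := a.re - 1) (by linarith) hz)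
    ((continuousOn_ofReal_cpow_mul_exp_neg_mul _ z).aestronglyMeasurable measurableSet_Ioi) ?_
  filter_upwards [ae_restrict_mem measurableSet_Ioi] with t ht
  rw [norm_ofReal_cpow_mul_exp_neg_mul ht, sub_re, one_re]

theorem differentiableOn_integral_cpow_mul_exp_neg_mul_Ioi {a : ℂ} (ha : 0 < a.re) :
    DifferentiableOn ℂ (fun z : ℂ => ∫ t in Ioi (0 : ℝ), (t : ℂ) ^ (a - 1) * cexp (-(z * t)))
      {z | 0 < z.re} := by
  intro z₀ hz₀
  have hε : 0 < z₀.re / 2 := half_pos hz₀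
  have hre : ∀ z ∈ Metric.ball z₀ (z₀.re / 2), z₀.re / 2 ≤ z.re := fun z hz => by
    have := (abs_re_le_norm (z - z₀)).trans_lt (mem_ball_iff_norm.mp hz)
    rw [sub_re] at this
    linarith [neg_abs_le (z.re - z₀.re)]
  refine (hasDerivAt_integral_of_dominated_loc_of_deriv_le
    (F' := fun z (t : ℝ) => -((t : ℂ) ^ (a - 1) * cexp (-(z * t)) * t))
    (bound := fun t : ℝ => t ^ a.re * Real.exp (-(z₀.re / 2 * t)))
    (Metric.ball_mem_nhds z₀ hε)
    (.of_forall fun z => (continuousOn_ofReal_cpow_mul_exp_neg_mul _ z).aestronglyMeasurable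
      measurableSet_Ioi)
    (integrableOn_cpow_mul_exp_neg_mul_Ioi ha hz₀) ?_ ?_
    (integrableOn_rpow_mul_exp_neg_mul_Ioi (by linarith) hε) ?_).2.differentiableAt
    |>.differentiableWithinAt
  · refine ContinuousOn.aestronglyMeasurable ?_ measurableSet_Ioi
    exact ((continuousOn_ofReal_cpow_mul_exp_neg_mul _ z₀).mul
      Complex.continuous_ofReal.continuousOn).neg
  · filter_upwards [ae_restrict_mem measurableSet_Ioi] with t (ht : 0 < t) z hz
    rw [norm_neg, norm_mul, norm_ofReal_cpow_mul_exp_neg_mul ht, norm_real,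
      Real.norm_of_nonneg ht.le, sub_re, one_re, mul_right_comm, ← Real.rpow_add_one ht.ne',
      sub_add_cancel]
    gcongr
    exact hre z hz
  · filter_upwards with t z _
    simpa [mul_assoc, mul_comm] using
      (((hasDerivAt_mul_const (t : ℂ)).neg).cexp.const_mul ((t : ℂ) ^ (a - 1)))

theorem integral_cpow_mul_exp_neg_mul_Ioi_of_re_pos {a z : ℂ} (ha : 0 < a.re) (hz : 0 < z.re) :
    ∫ t in Ioi (0 : ℝ), (t : ℂ) ^ (a - 1) * cexp (-(z * t)) = Gamma a * z ^ (-a) := by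
  have hU : IsOpen {w : ℂ | 0 < w.re} := isOpen_lt continuous_const continuous_re
  have hF := (differentiableOn_integral_cpow_mul_exp_neg_mul_Ioi ha).analyticOnNhd hU
  have hG : AnalyticOnNhd ℂ (fun w : ℂ => Gamma a * w ^ (-a)) {w | 0 < w.re} :=
    DifferentiableOn.analyticOnNhd (fun w hw => ((differentiableAt_id.cpow_const
      (Or.inl hw)).const_mul _).differentiableWithinAt) hU
  have hreal : ∀ᶠ r : ℝ in 𝓝[≠] 1, ∫ t in Ioi (0 : ℝ), (t : ℂ) ^ (a - 1) * cexp (-(r * t)) =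
      Gamma a * (r : ℂ) ^ (-a) := by
    filter_upwards [nhdsWithin_le_nhds (Ioi_mem_nhds one_pos)] with r (hr : 0 < r)
    rw [integral_cpow_mul_exp_neg_mul_Ioi ha hr, one_div, inv_cpow _ _
      (by rw [arg_ofReal_of_nonneg hr.le]; exact Real.pi_ne_zero.symm), ← cpow_neg, mul_comm]
  have hto : Tendsto ((↑) : ℝ → ℂ) (𝓝[≠] 1) (𝓝[≠] 1) := by
    have hmaps : MapsTo ((↑) : ℝ → ℂ) {1}ᶜ {1}ᶜ := fun r hr => by simpa using hr
    convert continuous_ofReal.continuousWithinAt.tendsto_nhdsWithin hmaps using 2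
    exact ofReal_one.symm
  exact hF.eqOn_of_preconnected_of_frequently_eq hG (convex_halfSpace_re_gt 0).isPreconnected
    (by simp) (hto.frequently hreal.frequently) hz

theorem norm_one_add_ofReal_mul_I_cpow (x y : ℝ) :
    ‖(1 + x * Complex.I) ^ (y : ℂ)‖ = (1 + ‖x‖ ^ 2) ^ (y / 2) := by
  rw [norm_cpow_real, ← ofReal_one, norm_add_mul_I, Real.sqrt_eq_rpow, ← Real.rpow_mul
    (by positivity), Real.norm_eq_abs, sq_abs, one_pow]
  ring_nf

def gammaKernel (s : ℝ) : ℝ → ℂ :=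
  (Ioi 0).indicator fun t => (t : ℂ) ^ (s : ℂ) * cexp (-t)

theorem integrable_gammaKernel {s : ℝ} (hs : -1 < s) : Integrable (gammaKernel s) := by
  rw [gammaKernel, integrable_indicator_iff measurableSet_Ioi]
  simpa using integrableOn_cpow_mul_exp_neg_mul_Ioi (a := s + 1) (z := 1)
    (by simp; linarith) (by simp)

theorem continuousAt_gammaKernel (s : ℝ) {t : ℝ} (ht : 0 < t) :
    ContinuousAt (gammaKernel s) t := by
  refine ((continuousAt_ofReal_cpow_const t s (Or.inr ht.ne')).mul
    (by fun_prop : Continuous fun t : ℝ => cexp (-t)).continuousAt).congr ?_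
  filter_upwards [Ioi_mem_nhds ht] with u hu
  rw [gammaKernel, indicator_of_mem hu]; rfl

theorem fourier_gammaKernel {s : ℝ} (hs : -1 < s) (w : ℝ) :
    𝓕 (gammaKernel s) w =
      Gamma (s + 1) * (1 + (2 * π * w : ℝ) * Complex.I) ^ (-((s : ℂ) + 1)) := by
  calc 𝓕 (gammaKernel s) w
      = ∫ t in Ioi (0 : ℝ), (t : ℂ) ^ ((s + 1 : ℂ) - 1) *
          cexp (-((1 + (2 * π * w : ℝ) * Complex.I) * t)) := by
        rw [Real.fourier_real_eq_integral_exp_smul, ← integral_indicator measurableSet_Ioi]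
        congr 1 with t
        by_cases ht : t ∈ Ioi 0
        · rw [gammaKernel, indicator_of_mem ht, indicator_of_mem ht, smul_eq_mul,
            add_sub_cancel_right, mul_left_comm, ← exp_add]
          congr 2
          push_cast
          ring
        · rw [gammaKernel, indicator_of_notMem ht, indicator_of_notMem ht, smul_zero]
    _ = _ := integral_cpow_mul_exp_neg_mul_Ioi_of_re_pos (by simp; linarith) (by simp)

theorem fourierInv_gammaKernel {s : ℝ} (hs : -1 < s) (y : ℝ) :
    𝓕⁻ (gammaKernel s) y =
      Gamma (s + 1) * (1 - (2 * π * y : ℝ) * Complex.I) ^ (-((s : ℂ) + 1)) := by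
  rw [Real.fourierInv_eq_fourier_neg, fourier_gammaKernel hs]
  push_cast
  ring_nf

theorem integrable_fourier_gammaKernel {s : ℝ} (hs : 0 < s) :
    Integrable (𝓕 (gammaKernel s)) := by
  have hbound : Integrable fun w : ℝ =>
      ‖Gamma (s + 1)‖ * (1 + ‖2 * π * w‖ ^ 2) ^ (-(s + 1) / 2) :=
    ((integrable_rpow_neg_one_add_norm_sq (by simp; linarith)).comp_mul_left'
      (by positivity : 2 * π ≠ 0)).const_mul _
  refine hbound.mono' (VectorFourier.fourierIntegral_continuous Real.continuous_fourierChar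
    continuous_inner (integrable_gammaKernel (by linarith))).aestronglyMeasurable
    (.of_forall fun w => le_of_eq ?_)
  rw [fourier_gammaKernel (by linarith), norm_mul, ← norm_one_add_ofReal_mul_I_cpow]
  push_cast
  rfl

theorem fourier_fourierInv_gammaKernel {s : ℝ} (hs : 0 < s) {t : ℝ} (ht : 0 < t) :
    𝓕 (𝓕⁻ (gammaKernel s)) t = gammaKernel s t :=
  (integrable_gammaKernel (by linarith)).fourier_fourierInv_eq
    (integrable_fourier_gammaKernel hs) (continuousAt_gammaKernel s ht)

theorem psiW_two_pi_mul {s : ℝ} (hs : -1 < s) (y : ℝ) :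
    psiW s (2 * π * y) =
      Complex.I ^ (-((s : ℂ) + 1)) / Gamma (s + 1) * 𝓕⁻ (gammaKernel s) y := by
  rw [fourierInv_gammaKernel hs]
  set z : ℂ := 1 - (2 * π * y : ℝ) * Complex.I
  have hz : 0 < z.re := by simp [z]
  have hz0 : z ≠ 0 := fun h => by simp [h] at hz
  have harg : Complex.I.arg + z.arg ∈ Ioc (-π) π := by
    have := abs_lt.mp (abs_arg_lt_pi_div_two_iff.mpr (Or.inl hz))
    rw [arg_I]
    constructor <;> linarith [Real.pi_pos]
  have hbase : ((2 * π * y : ℝ) : ℂ) + Complex.I = Complex.I * z := by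
    simp only [z]
    ring_nf
    rw [I_sq]
    ring
  have hΓ : Gamma ((s : ℂ) + 1) ≠ 0 := Gamma_ne_zero_of_re_pos (by simp; linarith)
  rw [psiW, hbase, mul_cpow_of_arg_add_mem_Ioc I_ne_zero hz0 harg]
  field_simp

theorem fourierT_eq_two_pi_mul_fourier_comp (f : ℝ → ℂ) (ξ : ℝ) :
    fourierT f ξ = 2 * π * 𝓕 (fun y => f (2 * π * y)) ξ := by
  have h := Measure.integral_comp_mul_left
    (fun x : ℝ => f x * cexp (-(Complex.I * x * ξ))) (2 * π)
  rw [abs_of_pos (inv_pos.mpr Real.two_pi_pos), real_smul] at h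
  rw [fourierT, Real.fourier_real_eq_integral_exp_smul, ← ofReal_ofNat, ← ofReal_mul]
  have hintegrand : (fun y : ℝ => cexp (↑(-2 * π * y * ξ) * Complex.I) • f (2 * π * y)) =
      fun y => f (2 * π * y) * cexp (-(Complex.I * ↑(2 * π * y) * ξ)) := by
    ext y
    rw [smul_eq_mul, mul_comm]
    push_cast
    ring_nf
  rw [hintegrand, h, ← mul_assoc, ← ofReal_mul, mul_inv_cancel₀ Real.two_pi_pos.ne', ofReal_one,
    one_mul]

theorem fourierT_psiW {s : ℝ} (hs : 0 < s) {ξ : ℝ} (hξ : 0 < ξ) :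
    fourierT (psiW s) ξ =
      2 * π * (Complex.I ^ (-((s : ℂ) + 1)) / Gamma (s + 1)) * gammaKernel s ξ := by
  have hψ : (fun y => psiW s (2 * π * y)) =
      (Complex.I ^ (-((s : ℂ) + 1)) / Gamma (s + 1)) • 𝓕⁻ (gammaKernel s) :=
    funext (psiW_two_pi_mul (by linarith))
  have hsmul (c : ℂ) (g : ℝ → ℂ) : 𝓕 (c • g) = c • 𝓕 g :=
    VectorFourier.fourierIntegral_const_smul _ _ _ _ _
  rw [fourierT_eq_two_pi_mul_fourier_comp, hψ, hsmul, Pi.smul_apply,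
    fourier_fourierInv_gammaKernel hs hξ, smul_eq_mul]
  ring

theorem norm_fourierT_psiW {s : ℝ} (hs : 0 < s) {ξ : ℝ} (hξ : 0 < ξ) :
    ‖fourierT (psiW s) ξ‖ = 2 * π / ‖Gamma (s + 1)‖ * (ξ ^ s * Real.exp (-ξ)) := by
  have hI : ‖Complex.I ^ (-((s : ℂ) + 1))‖ = 1 := by
    rw [← ofReal_one, ← ofReal_add, ← ofReal_neg, norm_cpow_real, norm_I, Real.one_rpow]
  have hk : ‖gammaKernel s ξ‖ = ξ ^ s * Real.exp (-ξ) := by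
    rw [gammaKernel, indicator_of_mem (mem_Ioi.mpr hξ), norm_mul,
      norm_cpow_eq_rpow_re_of_pos hξ, norm_exp, ofReal_re, neg_re, ofReal_re]
  rw [fourierT_psiW hs hξ, norm_mul, norm_mul, norm_div, hI, hk, norm_mul, norm_real,
    Real.norm_of_nonneg Real.pi_pos.le, Complex.norm_two]
  ring

theorem admissibility_psiW (s : ℝ) (hs : 1 < s) :
    IntegrableOn (fun ξ : ℝ => ‖fourierT (psiW s) ξ‖ ^ 2 / ξ) (Set.Ioi 0) ∧
    ∫ ξ in Set.Ioi (0 : ℝ), ‖fourierT (psiW s) ξ‖ ^ 2 / ξ =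
      ‖2 * (π : ℂ) * Complex.exp ((π : ℂ) * Complex.I * ((s : ℂ) + 1) / 2) /
          Complex.Gamma ((s : ℂ) + 1)‖ ^ 2 * (2 : ℝ) ^ (-2 * s) * Real.Gamma (2 * s) := by
  have hC : ‖2 * (π : ℂ) * Complex.exp ((π : ℂ) * Complex.I * ((s : ℂ) + 1) / 2) /
      Complex.Gamma ((s : ℂ) + 1)‖ = 2 * π / ‖Gamma (s + 1)‖ := by
    rw [norm_div, norm_mul, show (π : ℂ) * Complex.I * ((s : ℂ) + 1) / 2 =
      ((π * (s + 1) / 2 : ℝ) : ℂ) * Complex.I by push_cast; ring, norm_exp_ofReal_mul_I,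
      norm_mul, norm_real, Real.norm_of_nonneg Real.pi_pos.le, Complex.norm_two, mul_one]
  have hpointwise : ∀ ξ ∈ Ioi (0 : ℝ), ‖fourierT (psiW s) ξ‖ ^ 2 / ξ =
      (2 * π / ‖Gamma (s + 1)‖) ^ 2 * (ξ ^ (2 * s - 1) * Real.exp (-(2 * ξ))) := by
    intro ξ (hξ : 0 < ξ)
    rw [norm_fourierT_psiW (by linarith) hξ, Real.rpow_sub hξ, Real.rpow_one, mul_pow, mul_pow,
      ← Real.rpow_mul_natCast hξ.le, ← Real.exp_nat_mul]
    push_cast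
    ring_nf
  have hint := integrableOn_rpow_mul_exp_neg_mul_Ioi (a := 2 * s - 1) (by linarith) two_pos
  refine ⟨IntegrableOn.congr_fun (hint.const_mul _) (fun ξ hξ => (hpointwise ξ hξ).symm)
    measurableSet_Ioi, ?_⟩
  rw [setIntegral_congr_fun measurableSet_Ioi hpointwise, integral_const_mul,
    Real.integral_rpow_mul_exp_neg_mul_Ioi (by linarith) two_pos, one_div,
    Real.inv_rpow zero_le_two, ← Real.rpow_neg zero_le_two, neg_mul, hC, mul_assoc]
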